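/- Let (S, P) be an acyclic finite DTMC and B ⊆ S. If a function p : S → ℝ satisfies the SMT-encoding constraints for reachability — namely p s = 1 for every s ∈ B, p s = 0 for every s ∉ B from which B is not graph-reachable, and p s = ∑_{s' ∈ S} P s s' · p s' for every s ∉ B from which B is graph-reachable — then p s = Preach s for every s ∈ S. In particular, the SMT encoding of the eventuality probability has a unique solution on acyclic DTMCs, equal to the reachability probability. -/

import Mathlib

/-!
Induct along the well-founded successor relation. On `B` both sides are `1`; where `B` is not
graph-reachable every `reachN` vanishes, so both sides are `0`; elsewhere both `p` and the limit of
`reachN` satisfy the one-step equation `x s = ∑ s', P s s' * x s'`. There `P s s ≠ 1`, since a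
state with `P s s = 1` can only step to itself and so cannot reach `B`; hence the equation
determines `x s` from the values at the other successors, on which the two sides agree by
induction.
-/

open scoped Classical

/-- n-step reachability values of a target set `B` in a DTMC with transition
function `P`. -/
noncomputable def reachN {S : Type*} [Fintype S] (P : S → S → ℝ) (B : Set S) :
    ℕ → S → ℝ
  | 0, s => if s ∈ B then 1 else 0
  | n + 1, s => if s ∈ B then 1 else ∑ s' : S, P s s' * reachN P B n s'

/-- `B` is graph-reachable from `s`. -/
def GraphReach {S : Type*} (P : S → S → ℝ) (B : Set S) (s : S) : Prop :=
  ∃ t ∈ B, Relation.ReflTransGen (fun a b => 0 < P a b) s t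

open Filter Topology Finset

section
variable {S : Type*} {P : S → S → ℝ} {B : Set S} {s s' : S}

theorem GraphReach.of_mem (hs : s ∈ B) : GraphReach P B s :=
  ⟨s, hs, .refl⟩

theorem GraphReach.head (hss' : 0 < P s s') (h : GraphReach P B s') : GraphReach P B s :=
  let ⟨t, ht, hs't⟩ := h
  ⟨t, ht, .head hss' hs't⟩

variable [Fintype S]

theorem eq_zero_of_self_eq_one (hP : ∀ s s' : S, 0 ≤ P s s')
    (hsum : ∀ s : S, ∑ s' : S, P s s' = 1) (hss : P s s = 1) (hne : s' ≠ s) : P s s' = 0 := by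
  have hrest : ∑ t ∈ {s}ᶜ, P s t = 0 := by
    linarith [hsum s, Fintype.sum_eq_add_sum_compl s (P s)]
  exact (sum_eq_zero_iff_of_nonneg fun t _ => hP s t).1 hrest s' (by simpa using hne)

theorem self_ne_one_of_graphReach (hP : ∀ s s' : S, 0 ≤ P s s')
    (hsum : ∀ s : S, ∑ s' : S, P s s' = 1) (hs : s ∉ B) (hg : GraphReach P B s) :
    P s s ≠ 1 := by
  intro hss
  obtain ⟨t, ht, hst⟩ := hg
  have trapped : ∀ u, Relation.ReflTransGen (fun a b => 0 < P a b) s u → u = s := by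
    intro u hu
    induction hu with
    | refl => rfl
    | tail _ hvw ih =>
      subst ih
      by_contra hne
      exact hvw.ne' (eq_zero_of_self_eq_one hP hsum hss hne)
  exact hs (trapped t hst ▸ ht)

theorem eq_of_eq_sum_of_eq_on_successors {f g : S → ℝ} (hss : P s s ≠ 1)
    (hf : f s = ∑ s', P s s' * f s') (hg : g s = ∑ s', P s s' * g s')
    (hsucc : ∀ s', s' ≠ s → P s s' ≠ 0 → f s' = g s') : f s = g s := by
  rw [Fintype.sum_eq_add_sum_compl s] at hf hg
  have hrest : ∑ t ∈ {s}ᶜ, P s t * f t = ∑ t ∈ {s}ᶜ, P s t * g t := by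
    refine sum_congr rfl fun t ht => ?_
    by_cases hst : P s t = 0
    · simp [hst]
    · rw [hsucc t (by simpa using ht) hst]
  have hprod : (1 - P s s) * (f s - g s) = 0 := by linear_combination hf - hg + hrest
  simpa [sub_eq_zero, hss.symm] using hprod

theorem reachN_of_mem (hs : s ∈ B) (n : ℕ) : reachN P B n s = 1 := by
  cases n <;> simp [reachN, hs]

theorem reachN_zero_of_not_mem (hs : s ∉ B) : reachN P B 0 s = 0 :=
  if_neg hs

theorem reachN_succ_of_not_mem (hs : s ∉ B) (n : ℕ) :
    reachN P B (n + 1) s = ∑ s', P s s' * reachN P B n s' :=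
  if_neg hs

theorem reachN_nonneg (hP : ∀ s s' : S, 0 ≤ P s s') (n : ℕ) (s : S) : 0 ≤ reachN P B n s := by
  induction n generalizing s with
  | zero => unfold reachN; split_ifs <;> norm_num
  | succ n ih =>
    by_cases hs : s ∈ B
    · simp [reachN_of_mem hs]
    · rw [reachN_succ_of_not_mem hs]
      exact sum_nonneg fun s' _ => mul_nonneg (hP s s') (ih s')

theorem reachN_le_one (hP : ∀ s s' : S, 0 ≤ P s s') (hsum : ∀ s : S, ∑ s' : S, P s s' = 1)
    (n : ℕ) (s : S) : reachN P B n s ≤ 1 := by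
  induction n generalizing s with
  | zero => unfold reachN; split_ifs <;> norm_num
  | succ n ih =>
    by_cases hs : s ∈ B
    · simp [reachN_of_mem hs]
    · calc reachN P B (n + 1) s = ∑ s', P s s' * reachN P B n s' := reachN_succ_of_not_mem hs n
        _ ≤ ∑ s', P s s' := sum_le_sum fun s' _ => mul_le_of_le_one_right (hP s s') (ih s')
        _ = 1 := hsum s

theorem reachN_le_succ (hP : ∀ s s' : S, 0 ≤ P s s') (n : ℕ) (s : S) :
    reachN P B n s ≤ reachN P B (n + 1) s := by
  induction n generalizing s with
  | zero =>
    by_cases hs : s ∈ B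
    · simp [reachN_of_mem hs]
    · exact (reachN_zero_of_not_mem hs).trans_le (reachN_nonneg hP 1 s)
  | succ n ih =>
    by_cases hs : s ∈ B
    · simp [reachN_of_mem hs]
    · rw [reachN_succ_of_not_mem hs, reachN_succ_of_not_mem hs]
      exact sum_le_sum fun s' _ => mul_le_mul_of_nonneg_left (ih s') (hP s s')

theorem reachN_eq_zero_of_not_graphReach (hP : ∀ s s' : S, 0 ≤ P s s') (n : ℕ)
    (hs : ¬GraphReach P B s) : reachN P B n s = 0 := by
  have hsB : s ∉ B := fun h => hs (.of_mem h)
  induction n generalizing s with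
  | zero => exact reachN_zero_of_not_mem hsB
  | succ n ih =>
    rw [reachN_succ_of_not_mem hsB]
    refine sum_eq_zero fun s' _ => ?_
    rcases (hP s s').eq_or_lt with hzero | hpos
    · rw [← hzero, zero_mul]
    · have hs' : ¬GraphReach P B s' := fun h => hs (h.head hpos)
      rw [ih hs' fun h => hs' (.of_mem h), mul_zero]

theorem tendsto_reachN_iSup (hP : ∀ s s' : S, 0 ≤ P s s')
    (hsum : ∀ s : S, ∑ s' : S, P s s' = 1) (s : S) :
    Tendsto (fun n => reachN P B n s) atTop (𝓝 (⨆ n, reachN P B n s)) :=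
  tendsto_atTop_ciSup (monotone_nat_of_le_succ (reachN_le_succ hP · s))
    ⟨1, by rintro _ ⟨n, rfl⟩; exact reachN_le_one hP hsum n s⟩

theorem iSup_reachN_eq_sum (hP : ∀ s s' : S, 0 ≤ P s s')
    (hsum : ∀ s : S, ∑ s' : S, P s s' = 1) (hs : s ∉ B) :
    ⨆ n, reachN P B n s = ∑ s', P s s' * ⨆ n, reachN P B n s' := by
  have hshift := (tendsto_reachN_iSup hP hsum (B := B) s).comp (tendsto_add_atTop_nat 1)
  simp only [Function.comp_def, reachN_succ_of_not_mem hs] at hshift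
  exact tendsto_nhds_unique hshift
    (tendsto_finsetSum _ fun s' _ => (tendsto_reachN_iSup hP hsum s').const_mul _)

end

theorem smt_reach_unique_on_acyclic_general {S : Type*} [Fintype S]
    (P : S → S → ℝ)
    (hP : ∀ s s' : S, 0 ≤ P s s')
    (hsum : ∀ s : S, ∑ s' : S, P s s' = 1)
    (hwf : WellFounded (fun s' s : S => 0 < P s s' ∧ s' ≠ s))
    (B : Set S) (p : S → ℝ)
    (h1 : ∀ s ∈ B, p s = 1)
    (h0 : ∀ s : S, s ∉ B → ¬ GraphReach P B s → p s = 0)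
    (hrec : ∀ s : S, s ∉ B → GraphReach P B s → p s = ∑ s' : S, P s s' * p s') :
    ∀ s : S, p s = ⨆ n : ℕ, reachN P B n s := by
  intro s
  induction s using hwf.induction with
  | _ s IH =>
  by_cases hB : s ∈ B
  · simp [h1 s hB, reachN_of_mem hB]
  by_cases hg : GraphReach P B s
  · exact eq_of_eq_sum_of_eq_on_successors (self_ne_one_of_graphReach hP hsum hB hg)
      (hrec s hB hg) (iSup_reachN_eq_sum hP hsum hB)
      fun s' hne hpos => IH s' ⟨(hP s s').lt_of_ne' hpos, hne⟩
  · simp [h0 s hB hg, reachN_eq_zero_of_not_graphReach hP _ hg]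

/-- Let (S, P) be an acyclic finite DTMC and B ⊆ S. If a function
p : S → ℝ satisfies the SMT-encoding constraints for reachability — p s = 1 on B,
p s = 0 on states outside B from which B is not graph-reachable, and
p s = ∑ s', P s s' * p s' on states outside B from which B is graph-reachable —
then p equals the reachability probability `Preach = ⨆ₙ reach n` everywhere. -/
theorem smt_reach_unique_on_acyclic {S : Type*} [Fintype S] [Nonempty S]
    (P : S → S → ℝ)
    (hP : ∀ s s' : S, 0 ≤ P s s')
    (hsum : ∀ s : S, ∑ s' : S, P s s' = 1)
    (habs : ∀ s : S, P s s = 1 ∨ P s s = 0)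
    (hwf : WellFounded (fun s' s : S => 0 < P s s' ∧ s' ≠ s))
    (B : Set S) (p : S → ℝ)
    (h1 : ∀ s ∈ B, p s = 1)
    (h0 : ∀ s : S, s ∉ B → ¬ GraphReach P B s → p s = 0)
    (hrec : ∀ s : S, s ∉ B → GraphReach P B s → p s = ∑ s' : S, P s s' * p s') :
    ∀ s : S, p s = ⨆ n : ℕ, reachN P B n s :=
  smt_reach_unique_on_acyclic_general P hP hsum hwf B p h1 h0 hrec
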